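/- Fix integers ℓ ≥ 2 and p ≥ 2, and let n have (ℓ,p)-digits n+1 = Σ_{i=0}^r n_i·p^{(i)} with n_r ≠ 0. Let T_n = { 0 ≤ t ≤ r−1 : n has a tail of length t and n_t = 1 }. Then the number of pairs (m, m+2) with both m and m+2 in supp(n) equals Σ_{t ∈ T_n} 2^{g(n)−t−1}. In particular, if T_n is empty (n is 'interior'), then no two elements of supp(n) differ by exactly 2. -/

import Mathlib

/-!
Write `N = n + 1 = ∑ nᵢ p^{(i)}` and `σ S = ∑_{i ∈ S} nᵢ p^{(i)}`, so that `n[S] = n - 2 σ S`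
(no truncation occurs, since `σ S < p^{(r)} ≤ n_r p^{(r)}`). Pairs `(m, m + 2)` in `supp(n)` are
therefore pairs of subset sums with `σ S = σ S' + 1`, and we may restrict to subsets of the
positions of nonzero digits, on which `σ` is injective (uniqueness of digit expansions).
Adding one to `σ S'` carries through the maximal digits at the bottom of `S'`, so `σ S = σ S' + 1`
holds exactly when the least element `t` of `S` has `n_t = 1` and a tail of length `t`, and
`S' = {0, …, t - 1} ∪ (S \ {t})`. For each `t ∈ T_n`, the rest of `S` is an arbitrary set of
nonzero positions strictly between `t` and `r`, of which there are `g(n) - t - 1`.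
-/

/-- `p^{(i)}`: `p^{(0)} = 1` and `p^{(i)} = ℓ·p^{i−1}` for `i ≥ 1`. -/
def plpow (ℓ p i : ℕ) : ℕ := if i = 0 then 1 else ℓ * p ^ (i - 1)

/-- The `i`-th `(ℓ,p)`-digit of `N`, so that `N = ∑ i, pldig ℓ p N i * plpow ℓ p i`
with `0 ≤ N_0 < ℓ` and `0 ≤ N_i < p` for `i ≥ 1`. -/
def pldig (ℓ p N i : ℕ) : ℕ := if i = 0 then N % ℓ else (N / ℓ / p ^ (i - 1)) % p

/-- `n[S] = n − 2·∑_{i ∈ S} n_i·p^{(i)}`, where `n_i` are the `(ℓ,p)`-digits of `n+1`. -/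
def nSub (ℓ p n : ℕ) (S : Finset ℕ) : ℕ :=
  n - 2 * ∑ i ∈ S, pldig ℓ p (n + 1) i * plpow ℓ p i

/-- `n` has a tail of length `t`: all `(ℓ,p)`-digits of `n+1` at positions below
`t` are maximal, i.e. `n_0 = ℓ−1` and `n_i = p−1` for `0 < i < t`. -/
def hasTail (ℓ p n t : ℕ) : Prop :=
  ∀ i, i < t → pldig ℓ p (n + 1) i = (if i = 0 then ℓ else p) - 1

instance (ℓ p n t : ℕ) : Decidable (hasTail ℓ p n t) :=
  inferInstanceAs (Decidable (∀ i, i < t → pldig ℓ p (n + 1) i = (if i = 0 then ℓ else p) - 1))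

open Finset

def plbase (ℓ p i : ℕ) : ℕ := if i = 0 then ℓ else p

def plterm (ℓ p N i : ℕ) : ℕ := pldig ℓ p N i * plpow ℓ p i

section Digits

variable {ℓ p : ℕ}

lemma plbase_pos (hℓ : 0 < ℓ) (hp : 0 < p) (i : ℕ) : 0 < plbase ℓ p i := by
  unfold plbase; split <;> assumption

lemma plpow_succ (i : ℕ) : plpow ℓ p (i + 1) = plbase ℓ p i * plpow ℓ p i := by
  rcases i with _ | i
  · simp [plpow, plbase]
  · simp [plpow, plbase, pow_succ]; ring

lemma plpow_pos (hℓ : 0 < ℓ) (hp : 0 < p) (i : ℕ) : 0 < plpow ℓ p i := by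
  unfold plpow; split <;> positivity

lemma pldig_eq_div_mod (N i : ℕ) : pldig ℓ p N i = N / plpow ℓ p i % plbase ℓ p i := by
  rcases i with _ | i <;> simp [pldig, plpow, plbase, Nat.div_div_eq_div_mul]

lemma pldig_lt_plbase (hℓ : 0 < ℓ) (hp : 0 < p) (N i : ℕ) : pldig ℓ p N i < plbase ℓ p i := by
  rw [pldig_eq_div_mod]; exact Nat.mod_lt _ (plbase_pos hℓ hp i)

lemma plpow_le_plterm {N i : ℕ} (h : pldig ℓ p N i ≠ 0) : plpow ℓ p i ≤ plterm ℓ p N i :=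
  Nat.le_mul_of_pos_left _ (Nat.pos_of_ne_zero h)

lemma plterm_add_plpow_le (hℓ : 0 < ℓ) (hp : 0 < p) (N i : ℕ) :
    plterm ℓ p N i + plpow ℓ p i ≤ plpow ℓ p (i + 1) := by
  rw [plpow_succ, plterm, ← Nat.succ_mul]
  exact Nat.mul_le_mul_right _ (pldig_lt_plbase hℓ hp N i)

lemma plterm_add_plpow_eq_iff (hℓ : 0 < ℓ) (hp : 0 < p) (N i : ℕ) :
    plterm ℓ p N i + plpow ℓ p i = plpow ℓ p (i + 1) ↔ pldig ℓ p N i = plbase ℓ p i - 1 := by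
  rw [plpow_succ, plterm, ← Nat.succ_mul, Nat.mul_left_inj (plpow_pos hℓ hp i).ne']
  have := plbase_pos hℓ hp i
  omega

lemma sum_range_plterm_add_plpow_mul_div (N k : ℕ) :
    ∑ i ∈ range k, plterm ℓ p N i + plpow ℓ p k * (N / plpow ℓ p k) = N := by
  induction k with
  | zero => simp [plpow]
  | succ k ih =>
    have hdiv : N / plpow ℓ p k
        = pldig ℓ p N k + plbase ℓ p k * (N / plpow ℓ p (k + 1)) := by
      rw [pldig_eq_div_mod, plpow_succ, Nat.mul_comm (plbase ℓ p k) (plpow ℓ p k),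
        ← Nat.div_div_eq_div_mul, Nat.mod_add_div]
    rw [hdiv, plpow_succ] at ih
    rw [sum_range_succ, plterm, plpow_succ]
    linarith

lemma sum_range_plterm_le (N k : ℕ) : ∑ i ∈ range k, plterm ℓ p N i ≤ N := by
  have := sum_range_plterm_add_plpow_mul_div (ℓ := ℓ) (p := p) N k
  omega

lemma sum_range_plterm_lt (hℓ : 0 < ℓ) (hp : 0 < p) (N k : ℕ) :
    ∑ i ∈ range k, plterm ℓ p N i < plpow ℓ p k := by
  induction k with
  | zero => simp [plpow]
  | succ k ih =>
    have := plterm_add_plpow_le hℓ hp N k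
    rw [sum_range_succ]
    omega

lemma sum_range_plterm_eq_iff (hℓ : 0 < ℓ) (hp : 0 < p) (N t : ℕ) :
    ∑ i ∈ range t, plterm ℓ p N i = plpow ℓ p t - 1 ↔
      ∀ i < t, pldig ℓ p N i = plbase ℓ p i - 1 := by
  induction t with
  | zero => simp [plpow]
  | succ t ih =>
    have hlt := sum_range_plterm_lt hℓ hp N t
    have hle := plterm_add_plpow_le hℓ hp N t
    have hsucc : ∑ i ∈ range (t + 1), plterm ℓ p N i = plpow ℓ p (t + 1) - 1 ↔
        ∑ i ∈ range t, plterm ℓ p N i = plpow ℓ p t - 1 ∧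
          plterm ℓ p N t + plpow ℓ p t = plpow ℓ p (t + 1) := by
      rw [sum_range_succ]; omega
    rw [hsucc, ih, plterm_add_plpow_eq_iff hℓ hp, Nat.forall_lt_succ_right]

end Digits

def pldigSupport (ℓ p N k : ℕ) : Finset ℕ := (range k).filter (fun i => pldig ℓ p N i ≠ 0)

section SubsetSums

variable {ℓ p N : ℕ}

@[simp] lemma mem_pldigSupport {k i : ℕ} :
    i ∈ pldigSupport ℓ p N k ↔ i < k ∧ pldig ℓ p N i ≠ 0 := by
  simp [pldigSupport]

lemma pldigSupport_subset_range (k : ℕ) : pldigSupport ℓ p N k ⊆ range k :=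
  filter_subset _ _

lemma pldigSupport_succ_subset (k : ℕ) :
    pldigSupport ℓ p N (k + 1) ⊆ insert k (pldigSupport ℓ p N k) := by
  intro i
  simp only [mem_pldigSupport, mem_insert]
  omega

lemma pldigSupport_succ_of_ne_zero {k : ℕ} (h : pldig ℓ p N k ≠ 0) :
    pldigSupport ℓ p N (k + 1) = insert k (pldigSupport ℓ p N k) := by
  ext i
  simp only [mem_pldigSupport, mem_insert]
  constructor
  · omega
  · rintro (rfl | ⟨hi, hd⟩) <;> [exact ⟨by omega, h⟩; exact ⟨by omega, hd⟩]

lemma range_subset_pldigSupport (hℓ : 2 ≤ ℓ) (hp : 2 ≤ p) {t k : ℕ} (htk : t ≤ k)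
    (htail : ∀ i < t, pldig ℓ p N i = plbase ℓ p i - 1) : range t ⊆ pldigSupport ℓ p N k := by
  intro i hi
  rw [mem_range] at hi
  have : 2 ≤ plbase ℓ p i := by unfold plbase; split <;> assumption
  simp only [mem_pldigSupport, htail i hi]
  omega

lemma sum_plterm_lt_plpow (hℓ : 0 < ℓ) (hp : 0 < p) {k : ℕ} {S : Finset ℕ} (hS : S ⊆ range k) :
    ∑ i ∈ S, plterm ℓ p N i < plpow ℓ p k :=
  (sum_le_sum_of_subset hS).trans_lt (sum_range_plterm_lt hℓ hp N k)

lemma plpow_le_sum_plterm {k : ℕ} {S : Finset ℕ} (hk : k ∈ S) (hd : pldig ℓ p N k ≠ 0) :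
    plpow ℓ p k ≤ ∑ i ∈ S, plterm ℓ p N i :=
  (plpow_le_plterm hd).trans (single_le_sum (fun _ _ => Nat.zero_le _) hk)

lemma sum_plterm_lt_of_mem_of_notMem (hℓ : 0 < ℓ) (hp : 0 < p) {k : ℕ} {S S' : Finset ℕ}
    (hS : S ⊆ pldigSupport ℓ p N (k + 1)) (hS' : S' ⊆ pldigSupport ℓ p N (k + 1))
    (hk : k ∈ S) (hk' : k ∉ S') :
    ∑ i ∈ S', plterm ℓ p N i < ∑ i ∈ S, plterm ℓ p N i := by
  have hS'k : S' ⊆ range k := ((subset_insert_iff_of_notMem hk').1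
    (hS'.trans (pldigSupport_succ_subset k))).trans (pldigSupport_subset_range k)
  exact (sum_plterm_lt_plpow hℓ hp hS'k).trans_le
    (plpow_le_sum_plterm hk (mem_pldigSupport.1 (hS hk)).2)

lemma injOn_sum_plterm (hℓ : 0 < ℓ) (hp : 0 < p) (k : ℕ) :
    Set.InjOn (fun S => ∑ i ∈ S, plterm ℓ p N i) (pldigSupport ℓ p N k).powerset := by
  induction k with
  | zero =>
    intro S hS S' hS' _
    simp only [coe_powerset, Set.mem_preimage, Set.mem_powerset_iff, coe_subset] at hS hS'
    rw [subset_empty.1 (hS.trans (by simp [pldigSupport])),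
      subset_empty.1 (hS'.trans (by simp [pldigSupport]))]
  | succ k ih =>
    intro S hS S' hS' h
    simp only [coe_powerset, Set.mem_preimage, Set.mem_powerset_iff, coe_subset] at hS hS' ih
    simp only at h
    have hsub := pldigSupport_succ_subset (ℓ := ℓ) (p := p) (N := N) k
    by_cases hk : k ∈ S <;> by_cases hk' : k ∈ S'
    · have herase : S.erase k = S'.erase k := by
        refine ih (subset_insert_iff.1 (hS.trans hsub)) (subset_insert_iff.1 (hS'.trans hsub)) ?_
        have := add_sum_erase S (plterm ℓ p N) hk
        have := add_sum_erase S' (plterm ℓ p N) hk'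
        simp only
        omega
      rw [← insert_erase hk, ← insert_erase hk', herase]
    · exact absurd h (sum_plterm_lt_of_mem_of_notMem hℓ hp hS hS' hk hk').ne'
    · exact absurd h (sum_plterm_lt_of_mem_of_notMem hℓ hp hS' hS hk' hk).ne
    · exact ih ((subset_insert_iff_of_notMem hk).1 (hS.trans hsub))
        ((subset_insert_iff_of_notMem hk').1 (hS'.trans hsub)) h

lemma exists_tail_of_sum_plterm_eq_add_one (hℓ : 0 < ℓ) (hp : 0 < p) {k : ℕ} {S S' : Finset ℕ}
    (hS : S ⊆ pldigSupport ℓ p N k) (hS' : S' ⊆ pldigSupport ℓ p N k)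
    (h : ∑ i ∈ S, plterm ℓ p N i = ∑ i ∈ S', plterm ℓ p N i + 1) :
    ∃ t ∈ S, (∀ i ∈ S, t ≤ i) ∧ (∀ i < t, pldig ℓ p N i = plbase ℓ p i - 1) ∧
      pldig ℓ p N t = 1 := by
  induction k generalizing S S' with
  | zero =>
    rw [subset_empty.1 (hS.trans (by simp [pldigSupport])),
      subset_empty.1 (hS'.trans (by simp [pldigSupport]))] at h
    simp at h
  | succ k ih =>
    have hsub := pldigSupport_succ_subset (ℓ := ℓ) (p := p) (N := N) k
    by_cases hk : k ∈ S <;> by_cases hk' : k ∈ S'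
    · have hSk := add_sum_erase S (plterm ℓ p N) hk
      have hS'k := add_sum_erase S' (plterm ℓ p N) hk'
      obtain ⟨t, ht, hmin, htail, hone⟩ := ih (subset_insert_iff.1 (hS.trans hsub))
        (subset_insert_iff.1 (hS'.trans hsub)) (by omega)
      have htk : t < k := (mem_pldigSupport.1 (subset_insert_iff.1 (hS.trans hsub) ht)).1
      refine ⟨t, mem_of_mem_erase ht, fun i hi => ?_, htail, hone⟩
      rcases eq_or_ne i k with rfl | hik
      · exact htk.le
      · exact hmin i (mem_erase.2 ⟨hik, hi⟩)
    · -- `∑ S' + 1 ≤ plpow k ≤ plterm k ≤ ∑ S` must be a chain of equalities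
      have hdk := (mem_pldigSupport.1 (hS hk)).2
      have hS'k : S' ⊆ range k := ((subset_insert_iff_of_notMem hk').1
        (hS'.trans hsub)).trans (pldigSupport_subset_range k)
      have hSk := add_sum_erase S (plterm ℓ p N) hk
      have h1 := sum_le_sum_of_subset (f := plterm ℓ p N) hS'k
      have h2 := sum_range_plterm_lt hℓ hp N k
      have h3 := plpow_le_plterm hdk
      have hrest : ∑ i ∈ S.erase k, plterm ℓ p N i = 0 := by omega
      refine ⟨k, hk, fun i hi => ?_, (sum_range_plterm_eq_iff hℓ hp N k).1 (by omega), ?_⟩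
      · by_contra! hik
        have hi' : i ∈ S.erase k := mem_erase.2 ⟨hik.ne, hi⟩
        have := plpow_le_sum_plterm hi' (mem_pldigSupport.1 (hS hi)).2
        have := plpow_pos hℓ hp i
        omega
      · have hwk : pldig ℓ p N k * plpow ℓ p k = 1 * plpow ℓ p k := by
          rw [one_mul]; exact le_antisymm (by unfold plterm at *; omega) h3
        exact Nat.eq_of_mul_eq_mul_right (plpow_pos hℓ hp k) hwk
    · exact absurd h (by have := sum_plterm_lt_of_mem_of_notMem hℓ hp hS' hS hk' hk; omega)
    · exact ih ((subset_insert_iff_of_notMem hk).1 (hS.trans hsub))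
        ((subset_insert_iff_of_notMem hk').1 (hS'.trans hsub)) h

lemma sum_plterm_insert_eq_sum_plterm_range_union_add_one (hℓ : 0 < ℓ) (hp : 0 < p)
    {t : ℕ} {C : Finset ℕ} (htail : ∀ i < t, pldig ℓ p N i = plbase ℓ p i - 1)
    (hone : pldig ℓ p N t = 1) (hC : ∀ i ∈ C, t < i) :
    ∑ i ∈ insert t C, plterm ℓ p N i = ∑ i ∈ range t ∪ C, plterm ℓ p N i + 1 := by
  have htC : t ∉ C := fun h => (hC t h).false
  have hdisj : Disjoint (range t) C :=
    disjoint_left.2 fun i hi hiC => (mem_range.1 hi).not_gt (hC i hiC)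
  rw [sum_insert htC, sum_union hdisj, (sum_range_plterm_eq_iff hℓ hp N t).2 htail, plterm,
    hone, one_mul]
  have := plpow_pos hℓ hp (ℓ := ℓ) (p := p) t
  omega

end SubsetSums

def succSumSubsets (ℓ p N r : ℕ) : Finset (Finset ℕ) :=
  (pldigSupport ℓ p N r).powerset.filter fun S => ∃ S', S' ∈ (pldigSupport ℓ p N r).powerset ∧
    ∑ i ∈ S, plterm ℓ p N i = ∑ i ∈ S', plterm ℓ p N i + 1

/-- The set `T_n`. -/
def tailOnes (ℓ p n r : ℕ) : Finset ℕ :=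
  (range r).filter (fun t => hasTail ℓ p n t ∧ pldig ℓ p (n + 1) t = 1)

section Counting

variable {ℓ p n r : ℕ}

lemma mem_tailOnes {t : ℕ} : t ∈ tailOnes ℓ p n r ↔
    t < r ∧ (∀ i < t, pldig ℓ p (n + 1) i = plbase ℓ p i - 1) ∧ pldig ℓ p (n + 1) t = 1 := by
  rw [tailOnes, mem_filter, mem_range]
  rfl

lemma succSumSubsets_eq_biUnion (hℓ : 2 ≤ ℓ) (hp : 2 ≤ p) :
    succSumSubsets ℓ p (n + 1) r =
      (tailOnes ℓ p n r).biUnion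
        (fun t => ((pldigSupport ℓ p (n + 1) r).filter (t < ·)).powerset.image (insert t)) := by
  ext S
  simp only [succSumSubsets, mem_filter, mem_powerset, mem_biUnion, mem_image]
  constructor
  · rintro ⟨hS, S', hS', h⟩
    obtain ⟨t, ht, hmin, htail, hone⟩ :=
      exists_tail_of_sum_plterm_eq_add_one (by omega) (by omega) hS hS' h
    refine ⟨t, mem_tailOnes.2 ⟨(mem_pldigSupport.1 (hS ht)).1, htail, hone⟩, S.erase t,
      fun i hi => mem_filter.2 ⟨hS (mem_of_mem_erase hi), ?_⟩, insert_erase ht⟩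
    exact (hmin i (mem_of_mem_erase hi)).lt_of_ne (ne_of_mem_erase hi).symm
  · rintro ⟨t, ht, C, hC, rfl⟩
    obtain ⟨htr, htail, hone⟩ := mem_tailOnes.1 ht
    have hCD : C ⊆ pldigSupport ℓ p (n + 1) r := hC.trans (filter_subset _ _)
    refine ⟨insert_subset (mem_pldigSupport.2 ⟨htr, by omega⟩) hCD, range t ∪ C,
      union_subset (range_subset_pldigSupport hℓ hp htr.le htail) hCD, ?_⟩
    exact sum_plterm_insert_eq_sum_plterm_range_union_add_one (by omega) (by omega) htail hone
      fun i hi => (mem_filter.1 (hC hi)).2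

lemma card_succSumSubsets (hℓ : 2 ≤ ℓ) (hp : 2 ≤ p) :
    #(succSumSubsets ℓ p (n + 1) r) =
      ∑ t ∈ tailOnes ℓ p n r, 2 ^ #((pldigSupport ℓ p (n + 1) r).filter (t < ·)) := by
  rw [succSumSubsets_eq_biUnion hℓ hp, card_biUnion]
  · refine sum_congr rfl fun t _ => ?_
    rw [card_image_of_injOn, card_powerset]
    intro C hC C' hC' h
    simp only [coe_powerset, Set.mem_preimage, Set.mem_powerset_iff, coe_subset] at hC hC'
    have htC : t ∉ C := fun h => (mem_filter.1 (hC h)).2.false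
    have htC' : t ∉ C' := fun h => (mem_filter.1 (hC' h)).2.false
    rw [← erase_insert htC, ← erase_insert htC']
    exact congrArg (·.erase t) h
  · intro t _ t' _ hne
    refine disjoint_left.2 fun S hS hS' => hne ?_
    simp only [mem_image, mem_powerset] at hS hS'
    obtain ⟨C, hC, rfl⟩ := hS
    obtain ⟨C', hC', h⟩ := hS'
    have h1 : t ∈ insert t' C' := h ▸ mem_insert_self t C
    have h2 : t' ∈ insert t C := h.symm ▸ mem_insert_self t' C'
    rcases mem_insert.1 h1 with h1 | h1
    · exact h1
    rcases mem_insert.1 h2 with h2 | h2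
    · exact h2.symm
    have := (mem_filter.1 (hC h2)).2
    have := (mem_filter.1 (hC' h1)).2
    omega

lemma card_filter_lt_pldigSupport (hℓ : 2 ≤ ℓ) (hp : 2 ≤ p) (hr : pldig ℓ p (n + 1) r ≠ 0)
    {t : ℕ} (ht : t ∈ tailOnes ℓ p n r) :
    #((pldigSupport ℓ p (n + 1) r).filter (t < ·)) =
      #(pldigSupport ℓ p (n + 1) (r + 1)) - 1 - t - 1 := by
  obtain ⟨htr, htail, hone⟩ := mem_tailOnes.1 ht
  have hle : (pldigSupport ℓ p (n + 1) r).filter (fun i => ¬ t < i) = range (t + 1) := by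
    have hsub : range (t + 1) ⊆ pldigSupport ℓ p (n + 1) r := by
      rw [range_add_one]
      exact insert_subset (mem_pldigSupport.2 ⟨htr, by omega⟩)
        (range_subset_pldigSupport hℓ hp htr.le htail)
    ext i
    simp only [mem_filter, mem_range]
    exact ⟨fun h => by omega, fun h => ⟨hsub (mem_range.2 h), by omega⟩⟩
  have hsplit := card_filter_add_card_filter_not (s := pldigSupport ℓ p (n + 1) r) (t < ·)
  rw [hle, card_range] at hsplit
  rw [pldigSupport_succ_of_ne_zero hr, card_insert_of_notMem (by simp)]
  omega

lemma nSub_eq (S : Finset ℕ) : nSub ℓ p n S = n - 2 * ∑ i ∈ S, plterm ℓ p (n + 1) i := rfl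

lemma two_mul_sum_plterm_le (hℓ : 0 < ℓ) (hp : 0 < p) (hr : pldig ℓ p (n + 1) r ≠ 0)
    {S : Finset ℕ} (hS : S ⊆ range r) : 2 * ∑ i ∈ S, plterm ℓ p (n + 1) i ≤ n := by
  have h1 := sum_plterm_lt_plpow (N := n + 1) hℓ hp hS
  have h2 := sum_le_sum_of_subset (f := plterm ℓ p (n + 1)) hS
  have h3 := plpow_le_plterm hr
  have h4 := sum_range_plterm_le (ℓ := ℓ) (p := p) (n + 1) (r + 1)
  rw [sum_range_succ] at h4
  omega

lemma image_nSub_powerset_range :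
    (range r).powerset.image (fun S => nSub ℓ p n S) =
      (pldigSupport ℓ p (n + 1) r).powerset.image (fun S => nSub ℓ p n S) := by
  refine Subset.antisymm ?_ (image_subset_image (powerset_mono.2 (pldigSupport_subset_range r)))
  intro m hm
  obtain ⟨S, hS, rfl⟩ := mem_image.1 hm
  refine mem_image.2 ⟨S.filter (fun i => pldig ℓ p (n + 1) i ≠ 0),
    mem_powerset.2 (filter_subset_filter _ (mem_powerset.1 hS)), ?_⟩
  rw [nSub_eq, nSub_eq, sum_filter_of_ne]
  intro i _ h hd
  simp [plterm, hd] at h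

lemma card_filter_add_two_mem_image_nSub (hℓ : 0 < ℓ) (hp : 0 < p) (hr : pldig ℓ p (n + 1) r ≠ 0) :
    #(((range r).powerset.image (fun S => nSub ℓ p n S)).filter
        (fun m => m + 2 ∈ (range r).powerset.image (fun S => nSub ℓ p n S))) =
      #(succSumSubsets ℓ p (n + 1) r) := by
  have hb : ∀ S ∈ (pldigSupport ℓ p (n + 1) r).powerset, 2 * ∑ i ∈ S, plterm ℓ p (n + 1) i ≤ n :=
    fun S hS => two_mul_sum_plterm_le hℓ hp hr
      ((mem_powerset.1 hS).trans (pldigSupport_subset_range r))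
  rw [image_nSub_powerset_range, filter_image, card_image_of_injOn]
  · unfold succSumSubsets
    congr 1
    refine filter_congr fun S hS => ?_
    simp only [mem_image, nSub_eq]
    refine exists_congr fun S' => and_congr_right fun hS' => ?_
    have := hb S hS
    have := hb S' hS'
    omega
  · intro S hS S' hS' h
    simp only [coe_filter] at hS hS'
    refine injOn_sum_plterm hℓ hp r hS.1 hS'.1 ?_
    have := hb S hS.1
    have := hb S' hS'.1
    simp only [nSub_eq] at h
    simp only
    omega

end Counting

theorem card_supp_pairs_differing_by_two_general (ℓ p n r : ℕ) (hℓ : 2 ≤ ℓ) (hp : 2 ≤ p)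
    (hr : pldig ℓ p (n + 1) r ≠ 0) :
    (((Finset.range r).powerset.image (fun S => nSub ℓ p n S)).filter
        (fun m => m + 2 ∈ (Finset.range r).powerset.image (fun S => nSub ℓ p n S))).card
      = ∑ t ∈ (Finset.range r).filter
            (fun t => hasTail ℓ p n t ∧ pldig ℓ p (n + 1) t = 1),
          2 ^ (((((Finset.range (r + 1)).filter
                  (fun i => pldig ℓ p (n + 1) i ≠ 0)).card) - 1) - t - 1) ∧
    ((Finset.range r).filter (fun t => hasTail ℓ p n t ∧ pldig ℓ p (n + 1) t = 1) = ∅ →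
      ∀ m ∈ (Finset.range r).powerset.image (fun S => nSub ℓ p n S),
        m + 2 ∉ (Finset.range r).powerset.image (fun S => nSub ℓ p n S)) := by
  have hcount := card_filter_add_two_mem_image_nSub (by omega) (by omega) hr
  rw [card_succSumSubsets hℓ hp] at hcount
  refine ⟨hcount.trans (sum_congr rfl fun t ht => ?_), fun hT m hm hm2 => ?_⟩
  · rw [card_filter_lt_pldigSupport hℓ hp hr ht]
    rfl
  · rw [tailOnes, hT, sum_empty, card_eq_zero, filter_eq_empty_iff] at hcount
    exact hcount hm hm2

/-- The number of pairs `(m, m+2)` with both members in `supp(n)` is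
`∑_{t ∈ T_n} 2^{g(n)−t−1}`, where `T_n` is the set of tail lengths `t` of `n`
with digit `n_t = 1`; in particular if `T_n = ∅` then no two elements of
`supp(n)` differ by exactly `2`. -/
theorem card_supp_pairs_differing_by_two (ℓ p n r : ℕ) (hℓ : 2 ≤ ℓ) (hp : 2 ≤ p)
    (hr : pldig ℓ p (n + 1) r ≠ 0)
    (htop : ∀ i, r < i → pldig ℓ p (n + 1) i = 0) :
    (((Finset.range r).powerset.image (fun S => nSub ℓ p n S)).filter
        (fun m => m + 2 ∈ (Finset.range r).powerset.image (fun S => nSub ℓ p n S))).card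
      = ∑ t ∈ (Finset.range r).filter
            (fun t => hasTail ℓ p n t ∧ pldig ℓ p (n + 1) t = 1),
          2 ^ (((((Finset.range (r + 1)).filter
                  (fun i => pldig ℓ p (n + 1) i ≠ 0)).card) - 1) - t - 1) ∧
    ((Finset.range r).filter (fun t => hasTail ℓ p n t ∧ pldig ℓ p (n + 1) t = 1) = ∅ →
      ∀ m ∈ (Finset.range r).powerset.image (fun S => nSub ℓ p n S),
        m + 2 ∉ (Finset.range r).powerset.image (fun S => nSub ℓ p n S)) :=
  card_supp_pairs_differing_by_two_general ℓ p n r hℓ hp hr
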